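/- arXiv:1810.08733 — 4 statements merged into one kernel-verified Lean document; each statement's English description precedes it below -/
import Mathlib

section
/- Let Γ ⊆ X be non-recurrent, let λ ∈ ℂ and g : Γ → ℂ. Then there exists a unique function φ : X_T → ℂ such that φ(S(s, x₀)) = e^{λ s} g(x₀) for all x₀ ∈ Γ and s ∈ [0,T] (the eigenfunction generated by (λ,g)). This φ agrees with g on Γ, and it satisfies the Koopman eigenfunction relation: for all x₀ ∈ Γ and all s ≥ 0, t ≥ 0 with s + t ≤ T, φ(S(t, S(s, x₀))) = e^{λ t} · φ(S(s, x₀)). -/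
/-- A set `Γ` is non-recurrent (for the flow `S` on the time horizon `T`) if
no point of `Γ` returns to `Γ` within time `(0, T]`. -/
def nonrecurrent {X : Type*} (S : ℝ → X → X) (T : ℝ) (Γ : Set X) : Prop :=
  ∀ x ∈ Γ, ∀ t : ℝ, 0 < t → t ≤ T → S t x ∉ Γ

/-- `X_T`: the image of `Γ` under the flow over the time interval `[0, T]`. -/
def flowImage {X : Type*} (S : ℝ → X → X) (T : ℝ) (Γ : Set X) : Set X :=
  {x | ∃ s ∈ Set.Icc (0:ℝ) T, ∃ x₀ ∈ Γ, S s x₀ = x}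

/-- `φ` is the eigenfunction generated by `(λ, g)`:
`φ(S(s, x₀)) = e^{λ s} g(x₀)` for all `x₀ ∈ Γ` and `s ∈ [0, T]`. -/
def IsEigOn {X : Type*} (S : ℝ → X → X) (T : ℝ) (Γ : Set X) (lam : ℂ) (g : Γ → ℂ)
    (φ : X → ℂ) : Prop :=
  ∀ (x₀ : Γ) (s : ℝ), s ∈ Set.Icc (0:ℝ) T →
    φ (S s (x₀ : X)) = Complex.exp (lam * (s : ℂ)) * g x₀

/-!
Non-recurrence makes `(s, x₀) ↦ S(s, x₀)` injective on `[0, T] × Γ`: if `S(s, x₀) = S(s', x₀')`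
with `s < s'`, flowing back by `s` gives `x₀ = S(s' - s, x₀') ∈ Γ`, a return within `(0, T]`.
So `X_T` is parametrized by `[0, T] × Γ`, and `φ` is the extension of
`(s, x₀) ↦ e^{λ s} g(x₀)` along this parametrization. The Koopman relation is then the
functional equation of the exponential.
-/

section Flow

variable {X : Type*} {S : ℝ → X → X} {T : ℝ} {Γ : Set X}

theorem flow_neg_apply_flow (hS0 : ∀ x, S 0 x = x)
    (hSadd : ∀ s t : ℝ, ∀ x, S (t + s) x = S t (S s x)) (s : ℝ) (x : X) :
    S (-s) (S s x) = x := by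
  rw [← hSadd, neg_add_cancel, hS0]

theorem nonrecurrent.eq_of_flow_eq_of_le (hΓ : nonrecurrent S T Γ) (hS0 : ∀ x, S 0 x = x)
    (hSadd : ∀ s t : ℝ, ∀ x, S (t + s) x = S t (S s x))
    {s s' : ℝ} {x₀ x₀' : X} (hx₀ : x₀ ∈ Γ) (hx₀' : x₀' ∈ Γ) (hs : 0 ≤ s) (hs' : s' ≤ T)
    (hle : s ≤ s') (h : S s x₀ = S s' x₀') : s = s' ∧ x₀ = x₀' := by
  have hback : x₀ = S (s' - s) x₀' := by
    rw [← flow_neg_apply_flow hS0 hSadd s x₀, h, ← hSadd, neg_add_eq_sub]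
  rcases hle.eq_or_lt with rfl | hlt
  · rw [sub_self, hS0] at hback
    exact ⟨rfl, hback⟩
  · exact absurd (hback ▸ hx₀) (hΓ x₀' hx₀' _ (sub_pos.2 hlt) (by linarith))

theorem nonrecurrent.injective_flow (hΓ : nonrecurrent S T Γ) (hS0 : ∀ x, S 0 x = x)
    (hSadd : ∀ s t : ℝ, ∀ x, S (t + s) x = S t (S s x)) :
    Function.Injective fun p : Set.Icc (0:ℝ) T × Γ => S p.1 p.2 := by
  rintro ⟨⟨s, hs⟩, ⟨x₀, hx₀⟩⟩ ⟨⟨s', hs'⟩, ⟨x₀', hx₀'⟩⟩ h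
  obtain ⟨hss', hxx'⟩ : s = s' ∧ x₀ = x₀' := by
    rcases le_total s s' with hle | hle
    · exact hΓ.eq_of_flow_eq_of_le hS0 hSadd hx₀ hx₀' hs.1 hs'.2 hle h
    · exact (hΓ.eq_of_flow_eq_of_le hS0 hSadd hx₀' hx₀ hs'.1 hs.2 hle h.symm).imp Eq.symm Eq.symm
  subst hss' hxx'
  rfl

noncomputable def generatedEigenfunction (S : ℝ → X → X) (T : ℝ) (Γ : Set X) (lam : ℂ)
    (g : Γ → ℂ) : X → ℂ :=
  Function.extend (fun p : Set.Icc (0:ℝ) T × Γ => S p.1 p.2)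
    (fun p => Complex.exp (lam * (p.1 : ℝ)) * g p.2) 0

theorem nonrecurrent.isEigOn_generatedEigenfunction (hΓ : nonrecurrent S T Γ)
    (hS0 : ∀ x, S 0 x = x) (hSadd : ∀ s t : ℝ, ∀ x, S (t + s) x = S t (S s x))
    (lam : ℂ) (g : Γ → ℂ) : IsEigOn S T Γ lam g (generatedEigenfunction S T Γ lam g) :=
  fun x₀ s hs => (hΓ.injective_flow hS0 hSadd).extend_apply _ _ (⟨s, hs⟩, x₀)

variable {lam : ℂ} {g : Γ → ℂ} {φ ψ : X → ℂ}

theorem IsEigOn.eqOn_flowImage (hφ : IsEigOn S T Γ lam g φ) (hψ : IsEigOn S T Γ lam g ψ) :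
    Set.EqOn φ ψ (flowImage S T Γ) := by
  rintro _ ⟨s, hs, x₀, hx₀, rfl⟩
  rw [hφ ⟨x₀, hx₀⟩ s hs, hψ ⟨x₀, hx₀⟩ s hs]

theorem IsEigOn.apply_of_mem (hφ : IsEigOn S T Γ lam g φ) (hS0 : ∀ x, S 0 x = x)
    (hT : 0 ≤ T) (x₀ : Γ) : φ x₀ = g x₀ := by
  simpa [hS0] using hφ x₀ 0 ⟨le_rfl, hT⟩

theorem IsEigOn.apply_flow_flow (hφ : IsEigOn S T Γ lam g φ)
    (hSadd : ∀ s t : ℝ, ∀ x, S (t + s) x = S t (S s x)) (x₀ : Γ) {s t : ℝ}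
    (hs : 0 ≤ s) (ht : 0 ≤ t) (hst : s + t ≤ T) :
    φ (S t (S s x₀)) = Complex.exp (lam * t) * φ (S s x₀) := by
  rw [← hSadd, hφ x₀ (t + s) ⟨by linarith, by linarith⟩, hφ x₀ s ⟨hs, by linarith⟩,
    Complex.ofReal_add, mul_add, Complex.exp_add, mul_assoc]

end Flow

theorem stmt1_general {X : Type*} (S : ℝ → X → X)
    (hS0 : ∀ x, S 0 x = x)
    (hSadd : ∀ s t : ℝ, ∀ x, S (t + s) x = S t (S s x))
    (T : ℝ) (hT : 0 < T) (Γ : Set X)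
    (hΓ : nonrecurrent S T Γ)
    (lam : ℂ) (g : Γ → ℂ) :
    -- existence of the eigenfunction generated by `(λ, g)`
    (∃ φ : X → ℂ, IsEigOn S T Γ lam g φ) ∧
    -- uniqueness on `X_T`
    (∀ φ ψ : X → ℂ, IsEigOn S T Γ lam g φ → IsEigOn S T Γ lam g ψ →
      ∀ x ∈ flowImage S T Γ, φ x = ψ x) ∧
    -- it agrees with `g` on `Γ` and satisfies the Koopman eigenfunction relation
    (∀ φ : X → ℂ, IsEigOn S T Γ lam g φ →
      (∀ x₀ : Γ, φ (x₀ : X) = g x₀) ∧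
      (∀ (x₀ : Γ) (s t : ℝ), 0 ≤ s → 0 ≤ t → s + t ≤ T →
        φ (S t (S s (x₀ : X))) = Complex.exp (lam * (t : ℂ)) * φ (S s (x₀ : X)))) :=
  ⟨⟨_, hΓ.isEigOn_generatedEigenfunction hS0 hSadd lam g⟩,
    fun _ _ hφ hψ => hφ.eqOn_flowImage hψ,
    fun _ hφ => ⟨hφ.apply_of_mem hS0 hT.le, fun x₀ _ _ hs ht hst =>
      hφ.apply_flow_flow hSadd x₀ hs ht hst⟩⟩

theorem stmt1 {X : Type*} [MetricSpace X] (S : ℝ → X → X)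
    (hS0 : ∀ x, S 0 x = x)
    (hSadd : ∀ s t : ℝ, ∀ x, S (t + s) x = S t (S s x))
    (hScont : Continuous fun p : ℝ × X => S p.1 p.2)
    (T : ℝ) (hT : 0 < T) (Γ : Set X)
    (hΓ : nonrecurrent S T Γ)
    (lam : ℂ) (g : Γ → ℂ) :
    -- existence of the eigenfunction generated by `(λ, g)`
    (∃ φ : X → ℂ, IsEigOn S T Γ lam g φ) ∧
    -- uniqueness on `X_T`
    (∀ φ ψ : X → ℂ, IsEigOn S T Γ lam g φ → IsEigOn S T Γ lam g ψ →
      ∀ x ∈ flowImage S T Γ, φ x = ψ x) ∧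
    -- it agrees with `g` on `Γ` and satisfies the Koopman eigenfunction relation
    (∀ φ : X → ℂ, IsEigOn S T Γ lam g φ →
      (∀ x₀ : Γ, φ (x₀ : X) = g x₀) ∧
      (∀ (x₀ : Γ) (s t : ℝ), 0 ≤ s → 0 ≤ t → s + t ≤ T →
        φ (S t (S s (x₀ : X))) = Complex.exp (lam * (t : ℂ)) * φ (S s (x₀ : X)))) :=
  stmt1_general S hS0 hSadd T hT Γ hΓ lam g
end

section
/- Let n ≥ 2, let S : ℝ × ℝⁿ → ℝⁿ be a continuous flow, let X' ⊆ ℝⁿ be compact, let Y' ⊆ ℝⁿ be convex and compact, and let ζ : Y' → X' be a bijection such that ζ and ζ⁻¹ are Lipschitz continuous. Assume the rectifying conjugacy: for every y ∈ Y' and t ≥ 0, if either (i) y + t' eₙ ∈ Y' for all t' ∈ [0,t], or (ii) S(t', ζ(y)) ∈ X' for all t' ∈ [0,t], then y + t eₙ ∈ Y' and S(t, ζ(y)) = ζ(y + t eₙ), where eₙ = (0,…,0,1). Let Γ = {x¹,…,x^M} ⊆ X' be a finite set such that no two of its points lie on the same trajectory, i.e. for i ≠ j and all t ∈ ℝ one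 has S(t, xⁱ) ≠ xʲ. Then there exists a Lipschitz continuous function γ : ℝ^{n-1} → ℝ such that the set Γ̂ = ζ({y ∈ Y' : yₙ = γ(y₁,…,y_{n-1})}) satisfies: Γ ⊆ Γ̂, Γ̂ is closed in ℝⁿ, and for every x ∈ Γ̂ and every t > 0 such that S(t', x) ∈ X' for all t' ∈ [0,t], one has S(t, x) ∉ Γ̂. -/
/-!
Pull the points of `Γ` back to `Y'`, where the flow is the translation `y ↦ y + t eₙ`. Two of
these points with the same first `n - 1` coordinates would be joined by a vertical segment, which
lies in the convex set `Y'`, so the flow would carry one point of `Γ` to the other. Hence the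
projections to `ℝⁿ⁻¹` are distinct, the prescribed heights form a Lipschitz function on this finite
set, and McShane's extension gives `γ`. Along a flow line the height `yₙ` strictly increases while
`(y₁, …, yₙ₋₁)` stays put, so a flow line meets the graph of `γ` at most once.
-/

open Set Function

theorem Set.Finite.exists_lipschitzOnWith {α β : Type*} [MetricSpace α] [PseudoMetricSpace β]
    {s : Set α} (hs : s.Finite) (f : α → β) : ∃ K, LipschitzOnWith K f s := by
  obtain ⟨K, hK⟩ :=
    ((hs.prod hs).image fun p : α × α => nndist (f p.1) (f p.2) / nndist p.1 p.2).bddAbove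
  refine ⟨K, LipschitzOnWith.of_dist_le_mul fun x hx y hy => ?_⟩
  rcases eq_or_ne x y with rfl | hxy
  · simp
  · have hle := hK ⟨(x, y), ⟨hx, hy⟩, rfl⟩
    rw [div_le_iff₀ (pos_iff_ne_zero.2 (mt nndist_eq_zero.1 hxy))] at hle
    simpa only [dist_nndist, NNReal.coe_mul] using NNReal.coe_le_coe.2 hle

theorem exists_lipschitzWith_comp_eq {ι α : Type*} [Finite ι] [MetricSpace α] {p : ι → α}
    (hp : Injective p) (v : ι → ℝ) :
    ∃ (K : NNReal) (γ : α → ℝ), LipschitzWith K γ ∧ ∀ i, γ (p i) = v i := by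
  obtain ⟨K, hK⟩ := (finite_range p).exists_lipschitzOnWith (extend p v 0)
  obtain ⟨γ, hγ, hγv⟩ := hK.extend_real
  exact ⟨K, γ, hγ, fun i => (hγv (mem_range_self i)).symm.trans (hp.extend_apply v 0 i)⟩

theorem Convex.add_smul_mem_of_mem_Icc {𝕜 E : Type*} [Field 𝕜] [LinearOrder 𝕜]
    [IsStrictOrderedRing 𝕜] [AddCommGroup E] [Module 𝕜 E] {s : Set E} (hs : Convex 𝕜 s)
    {x e : E} {t t' : 𝕜} (hx : x ∈ s) (hxt : x + t • e ∈ s) (ht' : t' ∈ Icc 0 t) :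
    x + t' • e ∈ s := by
  rcases ht'.1.eq_or_lt with rfl | ht'0
  · simpa using hx
  · have ht : 0 < t := ht'0.trans_le ht'.2
    have := hs.add_smul_mem hx hxt ⟨div_nonneg ht'.1 ht.le, div_le_one_of_le₀ ht'.2 ht.le⟩
    rwa [smul_smul, div_mul_cancel₀ _ ht.ne'] at this

namespace EuclideanSpace

variable {n : ℕ}

def dropLast (y : EuclideanSpace ℝ (Fin n)) : EuclideanSpace ℝ (Fin (n - 1)) :=
  WithLp.toLp 2 fun i => y (Fin.castLE (Nat.sub_le n 1) i)

theorem continuous_dropLast : Continuous (dropLast (n := n)) := by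
  unfold dropLast
  fun_prop

theorem dropLast_add_smul_single_last (hn : 0 < n) (y : EuclideanSpace ℝ (Fin n)) (t : ℝ) :
    dropLast (y + t • single ⟨n - 1, by omega⟩ 1) = dropLast y := by
  ext i
  have : Fin.castLE (Nat.sub_le n 1) i ≠ ⟨n - 1, by omega⟩ := Fin.ne_of_val_ne (by simp; omega)
  simp [dropLast, this]

theorem eq_add_smul_single_last_of_dropLast_eq (hn : 0 < n) {y y' : EuclideanSpace ℝ (Fin n)}
    (h : dropLast y = dropLast y') :
    y' = y + (y' ⟨n - 1, by omega⟩ - y ⟨n - 1, by omega⟩) • single ⟨n - 1, by omega⟩ 1 := by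
  ext k
  by_cases hk : k = ⟨n - 1, by omega⟩
  · subst hk
    simp
  · have hlt : k.1 < n - 1 := by
      have : k.1 ≠ n - 1 := fun h => hk (Fin.ext h)
      have := k.isLt
      omega
    have := congrArg (· ⟨k.1, hlt⟩) h
    simpa [dropLast, hk] using this.symm

end EuclideanSpace

open EuclideanSpace

section Rectification

variable {E : Type*} [AddCommGroup E] [Module ℝ E]

def IsRectifyingConjugacy (S : ℝ → E → E) (X' Y' : Set E) (ζ : Y' → X') (e : E) : Prop :=
  ∀ (y : Y') (t : ℝ), 0 ≤ t →
    ((∀ t' ∈ Icc (0 : ℝ) t, (y : E) + t' • e ∈ Y') ∨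
      (∀ t' ∈ Icc (0 : ℝ) t, S t' (ζ y : E) ∈ X')) →
    ∃ hmem : (y : E) + t • e ∈ Y', S t (ζ y : E) = (ζ ⟨(y : E) + t • e, hmem⟩ : E)

theorem IsRectifyingConjugacy.flow_eq_of_eq_add_smul {S : ℝ → E → E} {X' Y' : Set E}
    {ζ : Y' → X'} {e : E} (h : IsRectifyingConjugacy S X' Y' ζ e) (hY' : Convex ℝ Y')
    {y y' : Y'} {t : ℝ} (ht : 0 ≤ t) (hyy' : (y' : E) = y + t • e) : S t (ζ y) = ζ y' := by
  obtain ⟨hmem, hS⟩ :=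
    h y t ht (Or.inl fun t' ht' => hY'.add_smul_mem_of_mem_Icc y.2 (hyy' ▸ y'.2) ht')
  rw [hS, show (⟨(y : E) + t • e, hmem⟩ : Y') = y' from Subtype.ext hyy'.symm]

end Rectification

section GraphImage

variable {n : ℕ} {X' Y' : Set (EuclideanSpace ℝ (Fin n))}

def graphImage (hn : 0 < n) (ζ : Y' → X') (γ : EuclideanSpace ℝ (Fin (n - 1)) → ℝ) :
    Set (EuclideanSpace ℝ (Fin n)) :=
  {x | ∃ y : Y', (ζ y : EuclideanSpace ℝ (Fin n)) = x ∧
    (y : EuclideanSpace ℝ (Fin n)) ⟨n - 1, by omega⟩ = γ (dropLast y)}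

theorem isClosed_graphImage (hn : 0 < n) {ζ : Y' → X'} {γ : EuclideanSpace ℝ (Fin (n - 1)) → ℝ}
    (hY' : IsCompact Y') (hζ : Continuous ζ) (hγ : Continuous γ) :
    IsClosed (graphImage hn ζ γ) := by
  have : CompactSpace Y' := isCompact_iff_compactSpace.mp hY'
  have hgraph : IsClosed {y : Y' | (y : EuclideanSpace ℝ (Fin n)) ⟨n - 1, by omega⟩ =
      γ (dropLast y)} :=
    isClosed_eq ((PiLp.continuous_apply 2 _ _).comp continuous_subtype_val)
      (hγ.comp (continuous_dropLast.comp continuous_subtype_val))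
  have himage : graphImage hn ζ γ = (fun y => (ζ y : EuclideanSpace ℝ (Fin n))) '' {y : Y' |
      (y : EuclideanSpace ℝ (Fin n)) ⟨n - 1, by omega⟩ = γ (dropLast y)} := by
    ext x
    exact ⟨fun ⟨y, hx, hy⟩ => ⟨y, hy, hx⟩, fun ⟨y, hy, hx⟩ => ⟨y, hx, hy⟩⟩
  rw [himage]
  exact (hgraph.isCompact.image (continuous_subtype_val.comp hζ)).isClosed

theorem flow_notMem_graphImage (hn : 0 < n)
    {S : ℝ → EuclideanSpace ℝ (Fin n) → EuclideanSpace ℝ (Fin n)} {ζ : Y' → X'}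
    (hrect : IsRectifyingConjugacy S X' Y' ζ (single ⟨n - 1, by omega⟩ 1))
    (hζ : Injective ζ) {γ : EuclideanSpace ℝ (Fin (n - 1)) → ℝ} {x : EuclideanSpace ℝ (Fin n)}
    (hx : x ∈ graphImage hn ζ γ) {t : ℝ} (ht : 0 < t) (hX : ∀ t' ∈ Icc (0 : ℝ) t, S t' x ∈ X') :
    S t x ∉ graphImage hn ζ γ := by
  obtain ⟨y, rfl, hy⟩ := hx
  obtain ⟨hmem, hS⟩ := hrect y t ht.le (Or.inr hX)
  rintro ⟨y', hy'S, hy'⟩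
  obtain rfl : y' = ⟨_, hmem⟩ := hζ (Subtype.ext (hy'S.trans hS))
  rw [dropLast_add_smul_single_last hn, ← hy] at hy'
  exact ht.ne' (by simpa using hy')

theorem injective_dropLast_of_flow_ne (hn : 0 < n)
    {S : ℝ → EuclideanSpace ℝ (Fin n) → EuclideanSpace ℝ (Fin n)} {ζ : Y' → X'}
    (hrect : IsRectifyingConjugacy S X' Y' ζ (single ⟨n - 1, by omega⟩ 1))
    (hY' : Convex ℝ Y') {ι : Type*} {y : ι → Y'}
    (htraj : ∀ i j, i ≠ j → ∀ t : ℝ, S t (ζ (y i)) ≠ ζ (y j)) :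
    Injective fun i => dropLast (y i : EuclideanSpace ℝ (Fin n)) := by
  intro i j hij
  by_contra hne
  wlog hle : (y i : EuclideanSpace ℝ (Fin n)) ⟨n - 1, by omega⟩ ≤
      (y j : EuclideanSpace ℝ (Fin n)) ⟨n - 1, by omega⟩ generalizing i j
  · exact this hij.symm (Ne.symm hne) (le_of_not_ge hle)
  exact htraj i j hne _ (hrect.flow_eq_of_eq_add_smul hY' (sub_nonneg.2 hle)
    (eq_add_smul_single_last_of_dropLast_eq hn hij))

end GraphImage

theorem stmt3 {n : ℕ} (hn : 2 ≤ n)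
    (S : ℝ → EuclideanSpace ℝ (Fin n) → EuclideanSpace ℝ (Fin n))
    (X' Y' : Set (EuclideanSpace ℝ (Fin n)))
    (hY'conv : Convex ℝ Y') (hY'comp : IsCompact Y')
    -- `ζ : Y' → X'` is a bijection with `ζ` and `ζ⁻¹` Lipschitz
    (ζ : Y' → X') (ζinv : X' → Y')
    (hli : Function.LeftInverse ζinv ζ) (hri : Function.RightInverse ζinv ζ)
    (K₁ : NNReal) (hζ : LipschitzWith K₁ ζ)
    -- `eₙ = (0, …, 0, 1)`
    (en : EuclideanSpace ℝ (Fin n))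
    (hen : en = EuclideanSpace.single (⟨n - 1, by omega⟩ : Fin n) (1 : ℝ))
    -- the rectifying conjugacy
    (hrect : ∀ (y : Y') (t : ℝ), 0 ≤ t →
      ((∀ t' ∈ Set.Icc (0:ℝ) t, (y : EuclideanSpace ℝ (Fin n)) + t' • en ∈ Y') ∨
        (∀ t' ∈ Set.Icc (0:ℝ) t, S t' ((ζ y : X') : EuclideanSpace ℝ (Fin n)) ∈ X')) →
      ∃ hmem : (y : EuclideanSpace ℝ (Fin n)) + t • en ∈ Y',
        S t ((ζ y : X') : EuclideanSpace ℝ (Fin n)) =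
          ((ζ ⟨(y : EuclideanSpace ℝ (Fin n)) + t • en, hmem⟩ : X') :
            EuclideanSpace ℝ (Fin n)))
    -- the finite set `Γ = {x¹, …, x^M} ⊆ X'`, no two points on the same trajectory
    (M : ℕ) (xp : Fin M → EuclideanSpace ℝ (Fin n))
    (hxpX' : ∀ j, xp j ∈ X')
    (htraj : ∀ i j, i ≠ j → ∀ t : ℝ, S t (xp i) ≠ xp j) :
    ∃ (K : NNReal) (γ : EuclideanSpace ℝ (Fin (n - 1)) → ℝ),
      LipschitzWith K γ ∧
      -- `Γ̂ = ζ({y ∈ Y' : yₙ = γ(y₁, …, y_{n-1})})`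
      (∀ j, xp j ∈
        {x : EuclideanSpace ℝ (Fin n) | ∃ y : Y',
          ((ζ y : X') : EuclideanSpace ℝ (Fin n)) = x ∧
          (y : EuclideanSpace ℝ (Fin n)) (⟨n - 1, by omega⟩ : Fin n) =
            γ (WithLp.toLp 2 fun i : Fin (n - 1) =>
              (y : EuclideanSpace ℝ (Fin n)) (Fin.castLE (Nat.sub_le n 1) i))}) ∧
      IsClosed
        {x : EuclideanSpace ℝ (Fin n) | ∃ y : Y',
          ((ζ y : X') : EuclideanSpace ℝ (Fin n)) = x ∧
          (y : EuclideanSpace ℝ (Fin n)) (⟨n - 1, by omega⟩ : Fin n) =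
            γ (WithLp.toLp 2 fun i : Fin (n - 1) =>
              (y : EuclideanSpace ℝ (Fin n)) (Fin.castLE (Nat.sub_le n 1) i))} ∧
      ∀ x ∈
        {x : EuclideanSpace ℝ (Fin n) | ∃ y : Y',
          ((ζ y : X') : EuclideanSpace ℝ (Fin n)) = x ∧
          (y : EuclideanSpace ℝ (Fin n)) (⟨n - 1, by omega⟩ : Fin n) =
            γ (WithLp.toLp 2 fun i : Fin (n - 1) =>
              (y : EuclideanSpace ℝ (Fin n)) (Fin.castLE (Nat.sub_le n 1) i))},
        ∀ t : ℝ, 0 < t → (∀ t' ∈ Set.Icc (0:ℝ) t, S t' x ∈ X') →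
          S t x ∉
            {x : EuclideanSpace ℝ (Fin n) | ∃ y : Y',
              ((ζ y : X') : EuclideanSpace ℝ (Fin n)) = x ∧
              (y : EuclideanSpace ℝ (Fin n)) (⟨n - 1, by omega⟩ : Fin n) =
                γ (WithLp.toLp 2 fun i : Fin (n - 1) =>
                  (y : EuclideanSpace ℝ (Fin n)) (Fin.castLE (Nat.sub_le n 1) i))} := by
  subst hen
  set y : Fin M → Y' := fun j => ζinv ⟨xp j, hxpX' j⟩
  have hζy : ∀ j, (ζ (y j) : EuclideanSpace ℝ (Fin n)) = xp j := fun j =>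
    congrArg Subtype.val (hri _)
  have hinj := injective_dropLast_of_flow_ne (by omega) hrect hY'conv (y := y)
    (by simpa only [hζy] using htraj)
  obtain ⟨K, γ, hγ, hγy⟩ := exists_lipschitzWith_comp_eq hinj fun j =>
    (y j : EuclideanSpace ℝ (Fin n)) ⟨n - 1, by omega⟩
  exact ⟨K, γ, hγ, fun j => ⟨y j, hζy j, (hγy j).symm⟩,
    isClosed_graphImage (by omega) hY'comp hζ.continuous hγ.continuous,
    fun x hx t ht hX => flow_notMem_graphImage (by omega) hrect hli.injective hx ht hX⟩
end

section
/- Let Γ ⊆ X be compact and non-recurrent. Let Λ₀ ⊆ ℂ be closed under complex conjugation and contain at least one element with nonzero real part, and let Λ = lattice(Λ₀) = { Σ_{k=1}^{p} α_k λ_k : λ_k ∈ Λ₀, α_k ∈ ℕ₀, p ∈ ℕ }. Let G = {g_i}_{i=1}^∞ be a countable family of continuous functions g_i : Γ → ℂ whose linear span is dense in C(Γ;ℂ) with respect to the supremum norm. Then the linear span of the eigenfunctions generated by pairs (λ, g) with λ ∈ Λ and g ∈ G is dense in C(X_T;ℂ): for every continuous h : X_T → ℂ and every ε > 0 there exist N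 ∈ ℕ, λ₁,…,λ_N ∈ Λ, g'₁,…,g'_N ∈ G and c₁,…,c_N ∈ ℂ such that sup_{x ∈ X_T} | h(x) − Σ_{i=1}^N c_i φ_i(x) | < ε, where φ_i is the eigenfunction generated by (λ_i, g'_i). -/
/-- `lattice(Λ₀)`: all finite sums `Σ α_k λ_k` with `λ_k ∈ Λ₀`, `α_k ∈ ℕ₀`. -/
def latticeSet (Λ₀ : Set ℂ) : Set ℂ :=
  {z | ∃ (p : ℕ) (lam : Fin p → ℂ) (α : Fin p → ℕ),
    (∀ k, lam k ∈ Λ₀) ∧ z = ∑ k, (α k : ℂ) * lam k}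

/-!
Non-recurrence makes `(s, x₀) ↦ S(s, x₀)` a continuous bijection `[0,T] × Γ → X_T`, and under it
the eigenfunction generated by `(λ, g)` becomes `(s, x₀) ↦ e^{λs} g(x₀)`. The products
`e^{λs} f(x₀)` with `λ ∈ lattice(Λ₀)` and `f ∈ C(Γ)` form a monoid closed under conjugation;
an exponent with nonzero real part separates times and `C(Γ)` separates points of `Γ`, so by
Stone–Weierstrass their span is dense in `C([0,T] × Γ)`. Since multiplication by `e^{λs}` is
continuous, each such product is a limit of combinations `e^{λs} Σ cᵢ gᵢ(x₀)`; pulling back a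
continuous `h` on `X_T` then gives the approximation.
-/

open Set Function Submodule

theorem latticeSet_eq_closure (Λ₀ : Set ℂ) : latticeSet Λ₀ = AddSubmonoid.closure Λ₀ := by
  ext z
  constructor
  · rintro ⟨p, lam, α, hlam, rfl⟩
    exact sum_mem fun k _ => by
      simpa only [nsmul_eq_mul] using nsmul_mem (AddSubmonoid.subset_closure (hlam k)) (α k)
  · intro hz
    obtain ⟨l, hl, rfl⟩ := AddSubmonoid.exists_list_of_mem_closure hz
    exact ⟨l.length, fun k => l[k], 1, fun k => hl _ (List.getElem_mem _), by simp⟩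

theorem AddSubmonoid.star_mem_closure {M : Type*} [AddMonoid M] [StarAddMonoid M] {s : Set M}
    (hs : ∀ z ∈ s, star z ∈ s) {z : M} (hz : z ∈ closure s) : star z ∈ closure s := by
  induction hz using AddSubmonoid.closure_induction with
  | mem z hz => exact subset_closure (hs z hz)
  | zero => simp
  | add x y _ _ hx hy => rw [star_add]; exact add_mem hx hy

section ExpMul

variable {K : Type*} [TopologicalSpace K] [CompactSpace K] (T : ℝ)

noncomputable def expMul (lam : ℂ) : C(K, ℂ) →L[ℂ] C(Icc (0 : ℝ) T × K, ℂ) where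
  toFun f := ⟨fun p => Complex.exp (lam * p.1) * f p.2, by fun_prop⟩
  map_add' f f' := by ext; simp [mul_add]
  map_smul' c f := by ext; simp [mul_left_comm]
  cont := show Continuous fun f : C(K, ℂ) =>
      (⟨fun p => Complex.exp (lam * p.1), by fun_prop⟩ : C(Icc (0 : ℝ) T × K, ℂ)) *
        f.comp ContinuousMap.snd from
    continuous_const.mul (ContinuousMap.continuous_precomp _)

@[simp]
theorem expMul_apply (lam : ℂ) (f : C(K, ℂ)) (p : Icc (0 : ℝ) T × K) :
    expMul T lam f p = Complex.exp (lam * p.1) * f p.2 := rfl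

theorem expMul_zero_one : expMul T 0 (1 : C(K, ℂ)) = 1 := by
  ext; simp

theorem expMul_mul_expMul (lam mu : ℂ) (f f' : C(K, ℂ)) :
    expMul T lam f * expMul T mu f' = expMul T (lam + mu) (f * f') := by
  ext; simp [add_mul, Complex.exp_add]; ring

theorem star_expMul (lam : ℂ) (f : C(K, ℂ)) :
    star (expMul T lam f) = expMul T (star lam) (star f) := by
  ext; simp [← Complex.exp_conj]

theorem expMul_mem_closure_span {G : Set C(K, ℂ)} {f : C(K, ℂ)} (hf : f ∈ closure (span ℂ G))
    (lam : ℂ) :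
    expMul T lam f ∈ closure (span ℂ (expMul T lam '' G) : Set C(Icc (0 : ℝ) T × K, ℂ)) := by
  have := image_closure_subset_closure_image (expMul T lam).continuous ⟨f, hf, rfl⟩
  rwa [← ContinuousLinearMap.coe_coe, ← Submodule.map_coe, Submodule.map_span] at this

def expMulSubmonoid (L : AddSubmonoid ℂ) : Submonoid C(Icc (0 : ℝ) T × K, ℂ) where
  carrier := {F | ∃ lam ∈ L, ∃ f, expMul T lam f = F}
  one_mem' := ⟨0, zero_mem L, 1, expMul_zero_one T⟩
  mul_mem' := by
    rintro _ _ ⟨lam, hlam, f, rfl⟩ ⟨mu, hmu, f', rfl⟩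
    exact ⟨lam + mu, add_mem hlam hmu, f * f', (expMul_mul_expMul T lam mu f f').symm⟩

theorem star_expMulSubmonoid_subset {L : AddSubmonoid ℂ} (hL : ∀ z ∈ L, star z ∈ L) :
    star (expMulSubmonoid (K := K) T L : Set C(Icc (0 : ℝ) T × K, ℂ)) ⊆
      expMulSubmonoid (K := K) T L := by
  rintro F ⟨lam, hlam, f, hF⟩
  exact ⟨star lam, hL lam hlam, star f, by rw [← star_expMul, hF, star_star]⟩

theorem separatesPoints_expMulSubmonoid [T2Space K] {L : AddSubmonoid ℂ}
    (hre : ∃ z ∈ L, z.re ≠ 0) :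
    ((⇑) '' (expMulSubmonoid (K := K) T L : Set C(Icc (0 : ℝ) T × K, ℂ))).SeparatesPoints := by
  rintro ⟨t, x⟩ ⟨t', x'⟩ hne
  by_cases hx : x = x'
  · subst hx
    have ht : (t : ℝ) ≠ t' := fun h => hne (by rw [Subtype.ext h])
    obtain ⟨z, hz, hzre⟩ := hre
    refine ⟨_, ⟨expMul T z 1, ⟨z, hz, 1, rfl⟩, rfl⟩, fun h => ht ?_⟩
    have := congrArg (fun w => Real.log ‖w‖) h
    simpa [Complex.norm_exp, hzre] using this
  · obtain ⟨f, hf : Continuous f, hfx⟩ := separatesPoints_continuous_of_t35Space hx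
    refine ⟨_, ⟨expMul T 0 ⟨fun y => (f y : ℂ), by fun_prop⟩, ⟨0, zero_mem L, _, rfl⟩, rfl⟩, ?_⟩
    simpa using hfx

end ExpMul

theorem StarAlgebra.coe_adjoin_submonoid {R A : Type*} [CommSemiring R] [StarRing R] [Semiring A]
    [Algebra R A] [StarRing A] [StarModule R A] (M : Submonoid A) (hM : star (M : Set A) ⊆ M) :
    (StarAlgebra.adjoin R (M : Set A) : Set A) = span R (M : Set A) := by
  have : (StarAlgebra.adjoin R (M : Set A)).toSubalgebra = Algebra.adjoin R M := by
    rw [StarAlgebra.adjoin_toSubalgebra, union_eq_left.mpr hM]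
  change (Subalgebra.toSubmodule (StarAlgebra.adjoin R (M : Set A)).toSubalgebra : Set A) = _
  rw [this, Algebra.adjoin_eq_span, Submonoid.closure_eq]

theorem dense_span_expMul {K : Type*} [TopologicalSpace K] [CompactSpace K] [T2Space K] (T : ℝ)
    {L : AddSubmonoid ℂ} (hL : ∀ z ∈ L, star z ∈ L) (hre : ∃ z ∈ L, z.re ≠ 0)
    {ι : Type*} {g : ι → C(K, ℂ)} (hg : Dense (span ℂ (range g) : Set C(K, ℂ))) :
    Dense (span ℂ {F | ∃ lam ∈ L, ∃ i, expMul T lam (g i) = F} : Set C(Icc (0 : ℝ) T × K, ℂ)) := by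
  set V := (span ℂ {F | ∃ lam ∈ L, ∃ i, expMul T lam (g i) = F}).topologicalClosure
  have hMV : (expMulSubmonoid (K := K) T L : Set C(Icc (0 : ℝ) T × K, ℂ)) ⊆ V := by
    rintro _ ⟨lam, hlam, f, rfl⟩
    refine closure_mono (span_mono ?_) (expMul_mem_closure_span T (hg f) lam)
    rintro _ ⟨_, ⟨i, rfl⟩, rfl⟩
    exact ⟨lam, hlam, i, rfl⟩
  set A := StarAlgebra.adjoin ℂ (expMulSubmonoid (K := K) T L : Set C(Icc (0 : ℝ) T × K, ℂ))
  have hA : A.topologicalClosure = ⊤ :=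
    ContinuousMap.starSubalgebra_topologicalClosure_eq_top_of_separatesPoints A
      (Set.separatesPoints_mono (image_mono (StarAlgebra.subset_adjoin ℂ _))
        (separatesPoints_expMulSubmonoid T hre))
  have hAV : closure (A : Set C(Icc (0 : ℝ) T × K, ℂ)) ⊆ V := by
    rw [StarAlgebra.coe_adjoin_submonoid _ (star_expMulSubmonoid_subset T hL)]
    exact closure_minimal (span_le.mpr hMV) (isClosed_topologicalClosure _)
  intro F
  apply hAV
  rw [← StarSubalgebra.topologicalClosure_coe, hA]
  trivial

section Flow

variable {X : Type*} (S : ℝ → X → X) (T : ℝ) (Γ : Set X)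

def flowParam (p : Icc (0 : ℝ) T × Γ) : X := S p.1 p.2

theorem range_flowParam : range (flowParam S T Γ) = flowImage S T Γ := by
  ext x
  constructor
  · rintro ⟨⟨s, x₀⟩, rfl⟩
    exact ⟨s, s.2, x₀, x₀.2, rfl⟩
  · rintro ⟨s, hs, x₀, hx₀, rfl⟩
    exact ⟨(⟨s, hs⟩, ⟨x₀, hx₀⟩), rfl⟩

theorem continuous_flowParam [TopologicalSpace X] (hS : Continuous fun p : ℝ × X => S p.1 p.2) :
    Continuous (flowParam S T Γ) :=
  hS.comp (continuous_subtype_val.prodMap continuous_subtype_val)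

variable {S T Γ}

theorem nonrecurrent.injective_flowParam (hΓ : nonrecurrent S T Γ) (hS0 : ∀ x, S 0 x = x)
    (hSadd : ∀ s t : ℝ, ∀ x, S (t + s) x = S t (S s x)) : Injective (flowParam S T Γ) := by
  suffices key : ∀ p q : Icc (0 : ℝ) T × Γ, flowParam S T Γ p = flowParam S T Γ q →
      (q.1 : ℝ) ≤ p.1 → p = q by
    intro p q h
    rcases le_total (q.1 : ℝ) p.1 with hle | hle
    exacts [key p q h hle, (key q p h.symm hle).symm]
  rintro ⟨⟨s, hs⟩, x₀, hx₀⟩ ⟨⟨s', hs'⟩, x₀', hx₀'⟩ h (hle : s' ≤ s)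
  have hback : S (s - s') x₀ = x₀' := by
    have := congrArg (S (-s')) h
    simp only [flowParam, ← hSadd] at this
    rwa [neg_add_cancel, hS0, neg_add_eq_sub] at this
  obtain rfl | hlt := hle.eq_or_lt
  · rw [sub_self, hS0] at hback
    subst hback
    rfl
  · exact absurd (hback ▸ hx₀') (hΓ x₀ hx₀ (s - s') (sub_pos.mpr hlt) (by linarith [hs.2, hs'.1]))

theorem isEigOn_extend_expMul [TopologicalSpace X] [CompactSpace Γ]
    (hinj : Injective (flowParam S T Γ)) (lam : ℂ) (g : C(Γ, ℂ)) :
    IsEigOn S T Γ lam g (extend (flowParam S T Γ) (expMul T lam g) 0) := fun x₀ s hs =>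
  hinj.extend_apply _ _ (⟨s, hs⟩, x₀)

end Flow

theorem ContinuousMap.dense_span_range_of_approx {K ι : Type*} [TopologicalSpace K]
    [CompactSpace K] {g : ι → C(K, ℂ)}
    (hg : ∀ f : C(K, ℂ), ∀ ε : ℝ, 0 < ε → ∃ (N : ℕ) (c : Fin N → ℂ) (k : Fin N → ι),
      ∀ x, ‖f x - ∑ i, c i * g (k i) x‖ < ε) :
    Dense (span ℂ (range g) : Set C(K, ℂ)) := by
  refine fun f => Metric.mem_closure_iff.mpr fun ε hε => ?_
  obtain ⟨N, c, k, hck⟩ := hg f ε hε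
  refine ⟨∑ i, c i • g (k i), sum_mem fun i _ => smul_mem _ _ (subset_span ⟨k i, rfl⟩), ?_⟩
  rw [dist_eq_norm, ContinuousMap.norm_lt_iff _ hε]
  simpa using hck

theorem stmt5_general {X : Type*} [MetricSpace X] (S : ℝ → X → X)
    (hS0 : ∀ x, S 0 x = x)
    (hSadd : ∀ s t : ℝ, ∀ x, S (t + s) x = S t (S s x))
    (hScont : Continuous fun p : ℝ × X => S p.1 p.2)
    (T : ℝ) (Γ : Set X)
    (hΓcomp : IsCompact Γ) (hΓ : nonrecurrent S T Γ)
    (Λ₀ : Set ℂ)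
    (hconj : ∀ z ∈ Λ₀, (starRingEnd ℂ) z ∈ Λ₀)
    (hre : ∃ z ∈ Λ₀, z.re ≠ 0)
    -- `G = {g_i}_{i=1}^∞`, continuous, with dense span in `C(Γ; ℂ)` (sup norm)
    (g : ℕ → Γ → ℂ) (hgcont : ∀ i, Continuous (g i))
    (hgdense : ∀ f : Γ → ℂ, Continuous f → ∀ ε : ℝ, 0 < ε →
      ∃ (N : ℕ) (c : Fin N → ℂ) (k : Fin N → ℕ),
        ∀ x : Γ, ‖f x - ∑ i, c i * g (k i) x‖ < ε) :
    -- the span of the eigenfunctions generated by `(λ, g_i)`, `λ ∈ lattice(Λ₀)`,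
    -- is dense in `C(X_T; ℂ)` in the sup norm
    ∀ h : X → ℂ, ContinuousOn h (flowImage S T Γ) → ∀ ε : ℝ, 0 < ε →
      ∃ (N : ℕ) (lam : Fin N → ℂ) (k : Fin N → ℕ) (c : Fin N → ℂ)
        (φ : Fin N → X → ℂ),
        (∀ i, lam i ∈ latticeSet Λ₀) ∧
        (∀ i, IsEigOn S T Γ (lam i) (g (k i)) (φ i)) ∧
        ∀ x ∈ flowImage S T Γ, ‖h x - ∑ i, c i * φ i x‖ < ε := by
  intro h hh ε hε
  have : CompactSpace Γ := isCompact_iff_compactSpace.mp hΓcomp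
  let gc : ℕ → C(Γ, ℂ) := fun k => ⟨g k, hgcont k⟩
  have hG : Dense (span ℂ (range gc) : Set C(Γ, ℂ)) :=
    ContinuousMap.dense_span_range_of_approx fun f => hgdense f f.continuous
  rw [latticeSet_eq_closure]
  have hdense := dense_span_expMul T (fun z => AddSubmonoid.star_mem_closure hconj)
    (hre.imp fun z hz => ⟨AddSubmonoid.subset_closure hz.1, hz.2⟩) hG
  let H : C(Icc (0 : ℝ) T × Γ, ℂ) := ⟨h ∘ flowParam S T Γ, hh.comp_continuous
    (continuous_flowParam S T Γ hScont) fun p => range_flowParam S T Γ ▸ mem_range_self p⟩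
  obtain ⟨F, hF, hHF⟩ := Metric.mem_closure_iff.mp (hdense H) ε hε
  obtain ⟨N, c, e, rfl⟩ := mem_span_set'.mp hF
  choose lam hlam k hk using fun i => (e i).2
  have hinj := hΓ.injective_flowParam hS0 hSadd
  refine ⟨N, lam, k, c, fun i => extend (flowParam S T Γ) (expMul T (lam i) (gc (k i))) 0, hlam,
    fun i => isEigOn_extend_expMul hinj _ _, ?_⟩
  rw [← range_flowParam]
  rintro _ ⟨p, rfl⟩
  simp only [hinj.extend_apply, hk]
  calc ‖h (flowParam S T Γ p) - ∑ i, c i * (e i : C(Icc (0 : ℝ) T × Γ, ℂ)) p‖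
      = ‖(H - ∑ i, c i • (e i : C(Icc (0 : ℝ) T × Γ, ℂ))) p‖ := by simp [H]
    _ ≤ ‖H - ∑ i, c i • (e i : C(Icc (0 : ℝ) T × Γ, ℂ))‖ := ContinuousMap.norm_coe_le_norm _ p
    _ < ε := by rwa [← dist_eq_norm]

theorem stmt5 {X : Type*} [MetricSpace X] (S : ℝ → X → X)
    (hS0 : ∀ x, S 0 x = x)
    (hSadd : ∀ s t : ℝ, ∀ x, S (t + s) x = S t (S s x))
    (hScont : Continuous fun p : ℝ × X => S p.1 p.2)
    (T : ℝ) (hT : 0 < T) (Γ : Set X)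
    (hΓcomp : IsCompact Γ) (hΓ : nonrecurrent S T Γ)
    (Λ₀ : Set ℂ)
    (hconj : ∀ z ∈ Λ₀, (starRingEnd ℂ) z ∈ Λ₀)
    (hre : ∃ z ∈ Λ₀, z.re ≠ 0)
    -- `G = {g_i}_{i=1}^∞`, continuous, with dense span in `C(Γ; ℂ)` (sup norm)
    (g : ℕ → Γ → ℂ) (hgcont : ∀ i, Continuous (g i))
    (hgdense : ∀ f : Γ → ℂ, Continuous f → ∀ ε : ℝ, 0 < ε →
      ∃ (N : ℕ) (c : Fin N → ℂ) (k : Fin N → ℕ),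
        ∀ x : Γ, ‖f x - ∑ i, c i * g (k i) x‖ < ε) :
    -- the span of the eigenfunctions generated by `(λ, g_i)`, `λ ∈ lattice(Λ₀)`,
    -- is dense in `C(X_T; ℂ)` in the sup norm
    ∀ h : X → ℂ, ContinuousOn h (flowImage S T Γ) → ∀ ε : ℝ, 0 < ε →
      ∃ (N : ℕ) (lam : Fin N → ℂ) (k : Fin N → ℕ) (c : Fin N → ℂ)
        (φ : Fin N → X → ℂ),
        (∀ i, lam i ∈ latticeSet Λ₀) ∧
        (∀ i, IsEigOn S T Γ (lam i) (g (k i)) (φ i)) ∧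
        ∀ x ∈ flowImage S T Γ, ‖h x - ∑ i, c i * φ i x‖ < ε :=
  stmt5_general S hS0 hSadd hScont T Γ hΓcomp hΓ Λ₀ hconj hre g hgcont hgdense
end

section
/- Let Γ ⊆ X be non-recurrent, let λ ∈ ℂ, and let g, g̃ : Γ → ℂ be bounded. Let φ be the eigenfunction generated by (λ, g) and φ̃ the eigenfunction generated by (λ, g̃). Then for every x ∈ X_T, |φ(x) − φ̃(x)| ≤ max{1, e^{Re(λ)·T}} · sup_{x₀ ∈ Γ} |g(x₀) − g̃(x₀)|. -/
/-!
On an orbit segment `φ(S(s, x₀)) - φ̃(S(s, x₀)) = e^{λ s} (g(x₀) - g̃(x₀))`, and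
`|e^{λ s}| = e^{Re(λ) s}` is, for `s ∈ [0, T]`, at most `1` when `Re λ ≤ 0` and at most
`e^{Re(λ) T}` when `Re λ > 0`.
-/

theorem Real.exp_mul_le_max_one_exp_mul {a s T : ℝ} (hs : s ∈ Set.Icc 0 T) :
    Real.exp (a * s) ≤ max 1 (Real.exp (a * T)) := by
  rcases le_or_gt a 0 with ha | ha
  · refine le_max_of_le_left (Real.exp_le_one_iff.mpr ?_)
    exact mul_nonpos_of_nonpos_of_nonneg ha hs.1
  · exact le_max_of_le_right (Real.exp_le_exp.mpr (mul_le_mul_of_nonneg_left hs.2 ha.le))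

namespace IsEigOn

variable {X : Type*} {S : ℝ → X → X} {T : ℝ} {Γ : Set X} {lam : ℂ} {g g' : Γ → ℂ}
  {φ φ' : X → ℂ}

theorem sub (hφ : IsEigOn S T Γ lam g φ) (hφ' : IsEigOn S T Γ lam g' φ') :
    IsEigOn S T Γ lam (g - g') (φ - φ') := fun x₀ s hs => by
  simp only [Pi.sub_apply, hφ x₀ s hs, hφ' x₀ s hs, mul_sub]

theorem norm_le_of_mem_flowImage (hφ : IsEigOn S T Γ lam g φ)
    (hg : BddAbove (Set.range fun x₀ => ‖g x₀‖)) {x : X} (hx : x ∈ flowImage S T Γ) :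
    ‖φ x‖ ≤ max 1 (Real.exp (lam.re * T)) * ⨆ x₀ : Γ, ‖g x₀‖ := by
  obtain ⟨s, hs, x₀, hx₀, rfl⟩ := hx
  rw [hφ ⟨x₀, hx₀⟩ s hs, norm_mul, Complex.norm_exp, Complex.re_mul_ofReal]
  exact mul_le_mul (Real.exp_mul_le_max_one_exp_mul hs) (le_ciSup hg ⟨x₀, hx₀⟩)
    (norm_nonneg _) (zero_le_one.trans (le_max_left _ _))

end IsEigOn

theorem stmt7_general {X : Type*} (S : ℝ → X → X)
    (T : ℝ) (Γ : Set X)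
    (lam : ℂ) (g g' : Γ → ℂ)
    (hgb : ∃ C : ℝ, ∀ x₀ : Γ, ‖g x₀‖ ≤ C)
    (hg'b : ∃ C : ℝ, ∀ x₀ : Γ, ‖g' x₀‖ ≤ C)
    (φ φ' : X → ℂ)
    (hφ : IsEigOn S T Γ lam g φ) (hφ' : IsEigOn S T Γ lam g' φ') :
    ∀ x ∈ flowImage S T Γ,
      ‖φ x - φ' x‖ ≤
        max 1 (Real.exp (lam.re * T)) * ⨆ x₀ : Γ, ‖g x₀ - g' x₀‖ := by
  obtain ⟨C, hC⟩ := hgb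
  obtain ⟨C', hC'⟩ := hg'b
  have hbdd : BddAbove (Set.range fun x₀ => ‖(g - g') x₀‖) :=
    ⟨C + C', Set.forall_mem_range.mpr fun x₀ =>
      (norm_sub_le _ _).trans (add_le_add (hC x₀) (hC' x₀))⟩
  exact fun x hx => (hφ.sub hφ').norm_le_of_mem_flowImage hbdd hx

theorem stmt7 {X : Type*} [MetricSpace X] (S : ℝ → X → X)
    (hS0 : ∀ x, S 0 x = x)
    (hSadd : ∀ s t : ℝ, ∀ x, S (t + s) x = S t (S s x))
    (hScont : Continuous fun p : ℝ × X => S p.1 p.2)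
    (T : ℝ) (hT : 0 < T) (Γ : Set X)
    (hΓ : nonrecurrent S T Γ)
    (lam : ℂ) (g g' : Γ → ℂ)
    (hgb : ∃ C : ℝ, ∀ x₀ : Γ, ‖g x₀‖ ≤ C)
    (hg'b : ∃ C : ℝ, ∀ x₀ : Γ, ‖g' x₀‖ ≤ C)
    (φ φ' : X → ℂ)
    (hφ : IsEigOn S T Γ lam g φ) (hφ' : IsEigOn S T Γ lam g' φ') :
    ∀ x ∈ flowImage S T Γ,
      ‖φ x - φ' x‖ ≤
        max 1 (Real.exp (lam.re * T)) * ⨆ x₀ : Γ, ‖g x₀ - g' x₀‖ :=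
  stmt7_general S T Γ lam g g' hgb hg'b φ φ' hφ hφ'
end
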